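/- In the finite persuasion setting, suppose for some Π (a nonempty compact convex set of kernels) and some f̃ maximizing min_{π∈Π} V_R(π,·), the strict inequality max_{π∈Π} V_S(π,f̃) > min_{π∈Π} V_S(π,f̃) holds and min_{π∈Π} V_S(π,f̃) = BP (the Bayesian persuasion value). Then the payoffs from Bayesian persuasion are Pareto improvable: there exist a kernel π̂ with f̃ a V_R(π̂,·)-maximizer and V_S(π̂,f̃) = BP, and a kernel π' with V_R(π',f̃) ≥ V_R(π̂,f̃) and V_S(π',f̃) > V_S(π̂,f̃). -/
import Mathlib


open Finset

/-- A probabilistic information structure (stochastic kernel): for each state `ω`,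
`π ω` is a probability distribution over messages. -/
def IsKernel {Ω M : Type*} [Fintype M] (π : Ω → M → ℝ) : Prop :=
  (∀ ω m, 0 ≤ π ω m) ∧ ∀ ω, ∑ m, π ω m = 1

/-- A contingent plan: for each message `m`, `f m` is a probability distribution
over actions. -/
def IsPlan {M A : Type*} [Fintype A] (f : M → A → ℝ) : Prop :=
  (∀ m a, 0 ≤ f m a) ∧ ∀ m, ∑ a, f m a = 1

/-- Ex-ante expected payoff `V u (π, f) = Σ_{m,a,ω} f(m)(a) u(a,ω) π(m|ω) p₀(ω)`. -/
def V {Ω M A : Type*} [Fintype Ω] [Fintype M] [Fintype A]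
    (p₀ : Ω → ℝ) (u : A → Ω → ℝ) (π : Ω → M → ℝ) (f : M → A → ℝ) : ℝ :=
  ∑ m, ∑ a, ∑ ω, f m a * u a ω * π ω m * p₀ ω

section Aux

variable {Ω M A : Type*} [Fintype Ω] [Fintype M] [Fintype A]

/-- Auxiliary: the coefficient of `f m a` in `V`. -/
def coefV (p₀ : Ω → ℝ) (u : A → Ω → ℝ) (π : Ω → M → ℝ) (m : M) (a : A) : ℝ :=
  ∑ ω, u a ω * π ω m * p₀ ω

lemma V_eq (p₀ : Ω → ℝ) (u : A → Ω → ℝ) (π : Ω → M → ℝ) (f : M → A → ℝ) :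
    V p₀ u π f = ∑ m, ∑ a, f m a * coefV p₀ u π m a := by
  refine Finset.sum_congr rfl fun m _ => Finset.sum_congr rfl fun a _ => ?_
  rw [coefV, Finset.mul_sum]
  exact Finset.sum_congr rfl fun ω _ => by ring

lemma continuous_V (p₀ : Ω → ℝ) (u : A → Ω → ℝ) (f : M → A → ℝ) :
    Continuous fun π : Ω → M → ℝ => V p₀ u π f := by
  unfold V; fun_prop

lemma V_combo (p₀ : Ω → ℝ) (u : A → Ω → ℝ) (a b : ℝ) (π₁ π₂ : Ω → M → ℝ) (f : M → A → ℝ) :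
    V p₀ u (a • π₁ + b • π₂) f = a * V p₀ u π₁ f + b * V p₀ u π₂ f := by
  unfold V
  rw [Finset.mul_sum, Finset.mul_sum, ← Finset.sum_add_distrib]
  refine Finset.sum_congr rfl fun m _ => ?_
  rw [Finset.mul_sum, Finset.mul_sum, ← Finset.sum_add_distrib]
  refine Finset.sum_congr rfl fun a' _ => ?_
  rw [Finset.mul_sum, Finset.mul_sum, ← Finset.sum_add_distrib]
  refine Finset.sum_congr rfl fun ω _ => ?_
  have h : (a • π₁ + b • π₂) ω m = a * π₁ ω m + b * π₂ ω m := by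
    simp [Pi.add_apply, Pi.smul_apply, smul_eq_mul]
  rw [h]; ring

/-- The pure plan that takes action `σ m` after message `m`. -/
def purePlan [DecidableEq A] (σ : M → A) : M → A → ℝ := fun m a => if a = σ m then 1 else 0

lemma isPlan_pure [DecidableEq A] (σ : M → A) : IsPlan (purePlan σ) := by
  constructor
  · intro m a; unfold purePlan; split <;> norm_num
  · intro m; unfold purePlan; simp

lemma V_pure [DecidableEq A] (p₀ : Ω → ℝ) (u : A → Ω → ℝ) (π : Ω → M → ℝ) (σ : M → A) :
    V p₀ u π (purePlan σ) = ∑ m, coefV p₀ u π m (σ m) := by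
  rw [V_eq]
  refine Finset.sum_congr rfl fun m _ => ?_
  unfold purePlan
  simp [ite_mul]

end Aux

/-- The 'only if' direction of Theorem 2: if for some ambiguous information
structure `Π` and maxmin-optimal plan `f̃` the sender's payoff has strict upside
spread over `Π` while her minimal payoff equals the Bayesian persuasion value
`BP`, then the payoffs from Bayesian persuasion are Pareto improvable. -/
theorem stmt_13 {Ω M A : Type*} [Fintype Ω] [Fintype M] [Fintype A]
    (p₀ : Ω → ℝ) (hp₀ : ∀ ω, 0 < p₀ ω) (hp₀1 : ∑ ω, p₀ ω = 1)
    (uR uS : A → Ω → ℝ)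
    (BP : ℝ)
    (hBP : IsGreatest {v : ℝ | ∃ (π : Ω → M → ℝ) (f : M → A → ℝ),
      IsKernel π ∧ IsPlan f ∧
      (∀ f', IsPlan f' → V p₀ uR π f' ≤ V p₀ uR π f) ∧
      v = V p₀ uS π f} BP)
    (AIS : Set (Ω → M → ℝ)) (hAk : ∀ π ∈ AIS, IsKernel π)
    (hAne : AIS.Nonempty) (hAcp : IsCompact AIS) (hAcv : Convex ℝ AIS)
    (ftld : M → A → ℝ) (hftld : IsPlan ftld)
    (hopt : ∀ f, IsPlan f →
      sInf ((fun π => V p₀ uR π f) '' AIS) ≤ sInf ((fun π => V p₀ uR π ftld) '' AIS))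
    (hspread : sInf ((fun π => V p₀ uS π ftld) '' AIS)
      < sSup ((fun π => V p₀ uS π ftld) '' AIS))
    (hmin : sInf ((fun π => V p₀ uS π ftld) '' AIS) = BP) :
    ∃ πhat π' : Ω → M → ℝ,
      IsKernel πhat ∧
      (∀ f, IsPlan f → V p₀ uR πhat f ≤ V p₀ uR πhat ftld) ∧
      V p₀ uS πhat ftld = BP ∧
      IsKernel π' ∧
      V p₀ uR πhat ftld ≤ V p₀ uR π' ftld ∧
      V p₀ uS πhat ftld < V p₀ uS π' ftld := by
  classical
  obtain ⟨π₀, hπ₀⟩ := id hAne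
  haveI hA : Nonempty A := by
    rcases isEmpty_or_nonempty A with h | h
    · exfalso
      rcases isEmpty_or_nonempty M with hM | hM
      · -- then Ω must be empty-contradiction or messages: kernel over empty M
        rcases isEmpty_or_nonempty Ω with hΩ | hΩ
        · rw [Finset.univ_eq_empty, Finset.sum_empty] at hp₀1; norm_num at hp₀1
        · have := (hAk π₀ hπ₀).2 (Classical.arbitrary Ω)
          rw [Finset.univ_eq_empty, Finset.sum_empty] at this; norm_num at this
      · have := hftld.2 (Classical.arbitrary M)
        rw [Finset.univ_eq_empty, Finset.sum_empty] at this; norm_num at this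
    · exact h
  set v : ℝ := sInf ((fun π => V p₀ uR π ftld) '' AIS) with hvdef
  have hBdd : ∀ (u : A → Ω → ℝ) (f : M → A → ℝ), BddBelow ((fun π => V p₀ u π f) '' AIS) :=
    fun u f => (hAcp.image (continuous_V p₀ u f)).bddBelow
  -- Step 1: existence of πhat ∈ AIS to which every pure plan does no better than v.
  have key : ∃ πhat ∈ AIS, ∀ σ : M → A, V p₀ uR πhat (purePlan σ) ≤ v := by
    by_contra hcon
    push_neg at hcon
    set Φ : (Ω → M → ℝ) → ((M → A) → ℝ) := fun π σ => V p₀ uR π (purePlan σ) - v with hΦ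
    have hΦcont : Continuous Φ :=
      continuous_pi fun σ => (continuous_V p₀ uR (purePlan σ)).sub continuous_const
    have hDcp : IsCompact (Φ '' AIS) := hAcp.image hΦcont
    have hDcv : Convex ℝ (Φ '' AIS) := by
      rintro x ⟨π₁, hπ₁, rfl⟩ y ⟨π₂, hπ₂, rfl⟩ a b ha hb hab
      refine ⟨a • π₁ + b • π₂, hAcv hπ₁ hπ₂ ha hb hab, ?_⟩
      funext σ
      simp only [Φ, Pi.add_apply, Pi.smul_apply, smul_eq_mul, V_combo]
      linear_combination v * hab
    set K : Set ((M → A) → ℝ) := {x | ∀ σ, x σ ≤ 0} with hK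
    have hKcl : IsClosed K := by
      have : K = ⋂ σ : M → A, {x : (M → A) → ℝ | x σ ≤ 0} := by
        ext x; simp [hK]
      rw [this]
      exact isClosed_iInter fun σ => isClosed_le (continuous_apply σ) continuous_const
    have hKcv : Convex ℝ K := by
      intro x hx y hy a b ha hb _
      intro σ
      have h1 : a * x σ ≤ 0 := mul_nonpos_iff.2 (Or.inl ⟨ha, hx σ⟩)
      have h2 : b * y σ ≤ 0 := mul_nonpos_iff.2 (Or.inl ⟨hb, hy σ⟩)
      simp only [Pi.add_apply, Pi.smul_apply, smul_eq_mul]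
      linarith
    have hdisj : Disjoint (Φ '' AIS) K := by
      rw [Set.disjoint_left]
      rintro d ⟨π, hπ, rfl⟩ hdK
      obtain ⟨σ, hσ⟩ := hcon π hπ
      exact absurd (hdK σ) (by simp [Φ]; linarith)
    obtain ⟨g, s, t, hDs, hst, hKt⟩ :=
      geometric_hahn_banach_compact_closed hDcv hDcp hKcv hKcl hdisj
    have ht0 : t < 0 := by
      have h0K : (0 : (M → A) → ℝ) ∈ K := fun σ => le_of_eq rfl
      have := hKt 0 h0K
      simpa using this
    -- the separating functional has nonpositive coordinates
    have hgσ : ∀ σ : M → A, g (Pi.single σ (1:ℝ)) ≤ 0 := by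
      intro σ
      by_contra hpos
      push_neg at hpos
      set c : ℝ := (|t| + 1) / g (Pi.single σ (1:ℝ)) with hc
      have hcnn : 0 ≤ c := div_nonneg (by positivity) hpos.le
      have hmem : (-c) • (Pi.single σ (1:ℝ) : (M → A) → ℝ) ∈ K := by
        intro τ
        simp only [Pi.smul_apply, smul_eq_mul, Pi.single_apply]
        split
        · linarith
        · simp
      have h1 := hKt _ hmem
      rw [map_smul, smul_eq_mul] at h1
      have h2 : -c * g (Pi.single σ (1:ℝ)) = -(|t| + 1) := by
        rw [hc]; field_simp
      rw [h2] at h1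
      have := neg_abs_le t
      linarith
    set lam : (M → A) → ℝ := fun σ => -(g (Pi.single σ (1:ℝ))) with hlam
    have hlamnn : ∀ σ, 0 ≤ lam σ := fun σ => neg_nonneg.2 (hgσ σ)
    have hgd : ∀ d : (M → A) → ℝ, g d = -∑ σ, d σ * lam σ := by
      intro d
      conv_lhs => rw [← Finset.univ_sum_single d]
      rw [map_sum, ← Finset.sum_neg_distrib]
      refine Finset.sum_congr rfl fun σ _ => ?_
      have h : Pi.single σ (d σ) = d σ • (Pi.single σ (1:ℝ) : (M → A) → ℝ) := by
        funext τ; by_cases h : τ = σ <;> simp [Pi.single_apply, h]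
      rw [h, map_smul, smul_eq_mul, hlam]
      ring
    have hDpos : ∀ π ∈ AIS, 0 < ∑ σ, lam σ * Φ π σ := by
      intro π hπ
      have h1 := hDs (Φ π) ⟨π, hπ, rfl⟩
      rw [hgd] at h1
      have : ∑ σ, lam σ * Φ π σ = ∑ σ, Φ π σ * lam σ :=
        Finset.sum_congr rfl fun σ _ => mul_comm _ _
      rw [this]
      linarith
    set S : ℝ := ∑ σ, lam σ with hS
    have hSpos : 0 < S := by
      rcases (Finset.sum_nonneg fun σ _ => hlamnn σ).lt_or_eq with h | h
      · exact h
      · exfalso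
        have hzero : ∀ σ ∈ Finset.univ, lam σ = 0 :=
          (Finset.sum_eq_zero_iff_of_nonneg fun σ _ => hlamnn σ).1 h.symm
        have := hDpos π₀ hπ₀
        rw [Finset.sum_eq_zero fun σ hσ => by rw [hzero σ hσ]; ring] at this
        exact lt_irrefl 0 this
    -- the mixed plan given by lam
    set fstar : M → A → ℝ := fun m a => (∑ σ, lam σ * (if a = σ m then 1 else 0)) / S
      with hfstar
    have hfplan : IsPlan fstar := by
      constructor
      · intro m a
        refine div_nonneg (Finset.sum_nonneg fun σ _ => mul_nonneg (hlamnn σ) ?_) hSpos.le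
        split <;> norm_num
      · intro m
        rw [← Finset.sum_div]
        rw [Finset.sum_comm]
        have : ∀ σ ∈ Finset.univ, ∑ a, lam σ * (if a = σ m then (1:ℝ) else 0) = lam σ := by
          intro σ _
          simp [mul_ite]
        rw [Finset.sum_congr rfl this]
        exact div_self hSpos.ne'
    have hVf : ∀ π : Ω → M → ℝ, S * V p₀ uR π fstar = ∑ σ, lam σ * V p₀ uR π (purePlan σ) := by
      intro π
      rw [V_eq, Finset.mul_sum]
      calc ∑ m, S * ∑ a, fstar m a * coefV p₀ uR π m a
          = ∑ m, ∑ a, (∑ σ, lam σ * (if a = σ m then 1 else 0)) * coefV p₀ uR π m a := by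
            refine Finset.sum_congr rfl fun m _ => ?_
            rw [Finset.mul_sum]
            refine Finset.sum_congr rfl fun a _ => ?_
            rw [hfstar, ← mul_assoc, mul_comm S _, div_mul_cancel₀ _ hSpos.ne']
        _ = ∑ m, ∑ σ, lam σ * coefV p₀ uR π m (σ m) := by
            refine Finset.sum_congr rfl fun m _ => ?_
            simp_rw [Finset.sum_mul]
            rw [Finset.sum_comm]
            refine Finset.sum_congr rfl fun σ _ => ?_
            simp [mul_ite, ite_mul]
        _ = ∑ σ, ∑ m, lam σ * coefV p₀ uR π m (σ m) := Finset.sum_comm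
        _ = ∑ σ, lam σ * ∑ m, coefV p₀ uR π m (σ m) := by
            exact Finset.sum_congr rfl fun σ _ => (Finset.mul_sum _ _ _).symm
        _ = ∑ σ, lam σ * V p₀ uR π (purePlan σ) := by
            refine Finset.sum_congr rfl fun σ _ => ?_
            rw [V_pure]
    have hgt : ∀ π ∈ AIS, v < V p₀ uR π fstar := by
      intro π hπ
      have h1 := hVf π
      have h2 : ∑ σ, lam σ * V p₀ uR π (purePlan σ)
          = (∑ σ, lam σ * Φ π σ) + S * v := by
        rw [hS, Finset.sum_mul, ← Finset.sum_add_distrib]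
        refine Finset.sum_congr rfl fun σ _ => ?_
        simp only [Φ]; ring
      have h3 := hDpos π hπ
      have h4 : S * v < S * V p₀ uR π fstar := by rw [h1, h2]; linarith
      exact (mul_lt_mul_iff_right₀ hSpos).1 h4
    obtain ⟨πm, hπm, hmineq, _⟩ :=
      hAcp.exists_sInf_image_eq_and_le hAne (continuous_V p₀ uR fstar).continuousOn
    have := hopt fstar hfplan
    rw [hmineq] at this
    exact absurd this (not_le.2 (hgt πm hπm))
  -- Step 2: πhat is a best response and attains the min.
  obtain ⟨πhat, hπhA, hσall⟩ := key
  have hBR : ∀ f, IsPlan f → V p₀ uR πhat f ≤ v := by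
    intro f hf
    choose σstar hmem hmax using fun m =>
      Finset.exists_max_image (Finset.univ : Finset A) (fun a => coefV p₀ uR πhat m a)
        Finset.univ_nonempty
    have h1 : V p₀ uR πhat f ≤ V p₀ uR πhat (purePlan σstar) := by
      rw [V_eq, V_pure]
      refine Finset.sum_le_sum fun m _ => ?_
      calc ∑ a, f m a * coefV p₀ uR πhat m a
          ≤ ∑ a, f m a * coefV p₀ uR πhat m (σstar m) := by
            refine Finset.sum_le_sum fun a _ => ?_
            exact mul_le_mul_of_nonneg_left (hmax m a (Finset.mem_univ a)) (hf.1 m a)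
        _ = coefV p₀ uR πhat m (σstar m) := by
            rw [← Finset.sum_mul, hf.2 m, one_mul]
    exact h1.trans (hσall σstar)
  have hvle : v ≤ V p₀ uR πhat ftld :=
    csInf_le (hBdd uR ftld) ⟨πhat, hπhA, rfl⟩
  have hveq : V p₀ uR πhat ftld = v := le_antisymm (hBR ftld hftld) hvle
  have hBRf : ∀ f, IsPlan f → V p₀ uR πhat f ≤ V p₀ uR πhat ftld := by
    intro f hf; rw [hveq]; exact hBR f hf
  -- sender payoff at πhat equals BP
  have hVSBdd : BddBelow ((fun π => V p₀ uS π ftld) '' AIS) :=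
    (hAcp.image (continuous_V p₀ uS ftld)).bddBelow
  have hSle : V p₀ uS πhat ftld ≤ BP :=
    hBP.2 ⟨πhat, ftld, hAk _ hπhA, hftld, hBRf, rfl⟩
  have hSge : BP ≤ V p₀ uS πhat ftld := by
    rw [← hmin]
    exact csInf_le hVSBdd ⟨πhat, hπhA, rfl⟩
  have hSeq : V p₀ uS πhat ftld = BP := le_antisymm hSle hSge
  -- the improving kernel π'
  obtain ⟨π', hπ'A, hsupeq, _⟩ :=
    hAcp.exists_sSup_image_eq_and_ge hAne (continuous_V p₀ uS ftld).continuousOn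
  refine ⟨πhat, π', hAk _ hπhA, hBRf, hSeq, hAk _ hπ'A, ?_, ?_⟩
  · rw [hveq]
    exact csInf_le (hBdd uR ftld) ⟨π', hπ'A, rfl⟩
  · rw [hSeq, ← hmin, ← hsupeq]
    exact hspread
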